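/- Let f be a Laurent polynomial in r variables with Newton polytope Δ(f), and let n ≥ 1. Then the Newton polytope of the cyclic resultant f̃_n(z) = ∏_{k_1,...,k_r=0}^{n-1} f(e^{2πi k_1/n} z_1, ..., e^{2πi k_r/n} z_r) is n^r · Δ(f), and consequently the number of nonzero monomial terms of f̃_n is at most the number of lattice points in n^{r−1}·Δ(f). -/

import Mathlib

open Pointwise

/-- The Laurent polynomial f(u₁z₁, ..., u_r z_r). -/
noncomputable def twist {r : ℕ} (u : Fin r → ℂ) (f : AddMonoidAlgebra ℂ (Fin r → ℤ)) :
    AddMonoidAlgebra ℂ (Fin r → ℤ) :=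
  AddMonoidAlgebra.ofCoeff (f.coeff.sum fun j c => Finsupp.single j (c * ∏ i, u i ^ j i))

/-- The cyclic resultant f̃ₙ. -/
noncomputable def cyc {r : ℕ} (n : ℕ) (f : AddMonoidAlgebra ℂ (Fin r → ℤ)) :
    AddMonoidAlgebra ℂ (Fin r → ℤ) :=
  ∏ k : Fin r → Fin n, twist (fun i => Complex.exp (2 * Real.pi * Complex.I * (k i : ℕ) / n)) f

/-- The Newton polytope of a Laurent polynomial: the convex hull of its exponent vectors. -/
noncomputable def newton {r : ℕ} (f : AddMonoidAlgebra ℂ (Fin r → ℤ)) : Set (Fin r → ℝ) :=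
  convexHull ℝ ((fun j : Fin r → ℤ => fun i => (j i : ℝ)) '' (f.coeff.support : Set (Fin r → ℤ)))

/-!
`twist u` with all `u i ≠ 0` is an algebra endomorphism of the Laurent polynomial ring that
preserves supports, so f̃ₙ is a product of n^r Laurent polynomials with the same support as f.
Every exponent of such a product lies in n^r Δ(f); at n^r v, for a vertex v of Δ(f), the only
decomposition into exponents of the factors is v + ⋯ + v, so that coefficient is the (nonzero)
product of the v-coefficients. As Δ(f) is the convex hull of its vertices, Δ(f̃ₙ) = n^r Δ(f).

Twisting by an n-th root of unity in one coordinate permutes the factors of f̃ₙ, hence fixes f̃ₙ,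
which forces every exponent of f̃ₙ to be divisible by n. Dividing the exponents by n then injects
the support of f̃ₙ into the lattice points of n^{r-1} Δ(f).
-/

section Twist

variable {r : ℕ}

lemma coeff_twist (u : Fin r → ℂ) (f : AddMonoidAlgebra ℂ (Fin r → ℤ)) (a : Fin r → ℤ) :
    (twist u f).coeff a = f.coeff a * ∏ i, u i ^ a i := by
  classical
  simp only [twist, AddMonoidAlgebra.coeff_ofCoeff, Finsupp.sum_apply, Finsupp.single_apply]
  rw [Finsupp.sum_ite_eq']
  split_ifs with h <;> simp_all

lemma support_twist {u : Fin r → ℂ} (hu : ∀ i, u i ≠ 0) (f : AddMonoidAlgebra ℂ (Fin r → ℤ)) :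
    (twist u f).coeff.support = f.coeff.support := by
  ext a
  simp [coeff_twist, Finset.prod_eq_zero_iff, zpow_ne_zero, hu]

lemma twist_twist (u w : Fin r → ℂ) (f : AddMonoidAlgebra ℂ (Fin r → ℤ)) :
    twist u (twist w f) = twist (u * w) f := by
  ext a
  simp only [coeff_twist, Pi.mul_apply, mul_zpow, Finset.prod_mul_distrib]
  ring

noncomputable def monomialChar {u : Fin r → ℂ} (hu : ∀ i, u i ≠ 0) :
    Multiplicative (Fin r → ℤ) →* AddMonoidAlgebra ℂ (Fin r → ℤ) where
  toFun j := AddMonoidAlgebra.single j.toAdd (∏ i, u i ^ j.toAdd i)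
  map_one' := by simp [AddMonoidAlgebra.one_def]
  map_mul' a b := by
    simp [AddMonoidAlgebra.single_mul_single, zpow_add₀ (hu _), Finset.prod_mul_distrib]

lemma lift_monomialChar {u : Fin r → ℂ} (hu : ∀ i, u i ≠ 0) (f : AddMonoidAlgebra ℂ (Fin r → ℤ)) :
    AddMonoidAlgebra.lift ℂ _ _ (monomialChar hu) f = twist u f := by
  rw [AddMonoidAlgebra.lift_apply, twist, AddMonoidAlgebra.ofCoeff_finsuppSum]
  simp only [monomialChar, MonoidHom.coe_mk, OneHom.coe_mk, toAdd_ofAdd,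
    AddMonoidAlgebra.smul_single, smul_eq_mul, AddMonoidAlgebra.ofCoeff_single]

lemma twist_prod {u : Fin r → ℂ} (hu : ∀ i, u i ≠ 0) {ι : Type*} (s : Finset ι)
    (g : ι → AddMonoidAlgebra ℂ (Fin r → ℤ)) :
    twist u (∏ k ∈ s, g k) = ∏ k ∈ s, twist u (g k) := by
  simp only [← lift_monomialChar hu, map_prod]

end Twist

theorem eq_of_add_eq_one_add_smul_of_mem_extremePoints {E : Type*} [AddCommGroup E] [Module ℝ E]
    {C : Set E} {v a b : E} {c : ℝ} (hc : 0 ≤ c) (hv : v ∈ C.extremePoints ℝ) (ha : a ∈ C)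
    (hb : b ∈ c • C) (hab : a + b = (1 + c) • v) : a = v ∧ b = c • v := by
  rcases hc.eq_or_lt with rfl | hc
  · rw [Set.zero_smul_set ⟨a, ha⟩, Set.mem_zero] at hb
    subst hb
    simpa using hab
  obtain ⟨b, hb, rfl⟩ := hb
  have hv_mem : v ∈ openSegment ℝ a b := by
    refine ⟨(1 + c)⁻¹, c * (1 + c)⁻¹, by positivity, by positivity, by field_simp, ?_⟩
    rw [mul_comm, ← smul_smul, ← smul_add, hab, smul_smul, inv_mul_cancel₀ (by positivity),
      one_smul]
  obtain ⟨rfl, rfl⟩ := (mem_extremePoints.mp hv).2 a ha b hb hv_mem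
  exact ⟨rfl, rfl⟩

theorem convexHull_extremePoints_convexHull {E : Type*} [NormedAddCommGroup E] [NormedSpace ℝ E]
    {D : Set E} (hD : D.Finite) :
    convexHull ℝ ((convexHull ℝ D).extremePoints ℝ) = convexHull ℝ D := by
  have hE : ((convexHull ℝ D).extremePoints ℝ).Finite :=
    hD.subset extremePoints_convexHull_subset
  conv_rhs => rw [← closure_convexHull_extremePoints (hD.isCompact_convexHull (𝕜 := ℝ))
    (convex_convexHull ℝ D)]
  exact ((hE.isCompact_convexHull (𝕜 := ℝ)).isClosed.closure_eq).symm

section Newton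

open Finset

variable {r : ℕ}

def castVec : (Fin r → ℤ) →+ (Fin r → ℝ) := AddMonoidHom.compLeft (Int.castAddHom ℝ) (Fin r)

lemma castVec_injective : Function.Injective (castVec (r := r)) :=
  fun _ _ h => funext fun i => Int.cast_injective (congrFun h i)

lemma castVec_nsmul (m : ℕ) (a : Fin r → ℤ) : castVec (m • a) = (m : ℝ) • castVec a := by
  rw [map_nsmul, Nat.cast_smul_eq_nsmul]

lemma newton_eq_convexHull (f : AddMonoidAlgebra ℂ (Fin r → ℤ)) :
    newton f = convexHull ℝ (castVec '' (f.coeff.support : Set (Fin r → ℤ))) :=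
  rfl

lemma castVec_mem_newton {f : AddMonoidAlgebra ℂ (Fin r → ℤ)} {a : Fin r → ℤ}
    (ha : a ∈ f.coeff.support) : castVec a ∈ newton f :=
  subset_convexHull ℝ _ ⟨a, ha, rfl⟩

lemma newton_zero : newton (0 : AddMonoidAlgebra ℂ (Fin r → ℤ)) = ∅ := by
  simp [newton]

lemma castVec_mem_card_smul_newton {f : AddMonoidAlgebra ℂ (Fin r → ℤ)} (hf : f ≠ 0) {ι : Type*}
    {s : Finset ι} {g : ι → AddMonoidAlgebra ℂ (Fin r → ℤ)}
    (hg : ∀ k ∈ s, (g k).coeff.support ⊆ f.coeff.support) {a : Fin r → ℤ}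
    (ha : a ∈ (∏ k ∈ s, g k).coeff.support) : castVec a ∈ (#s : ℝ) • newton f := by
  classical
  induction s using Finset.induction_on generalizing a with
  | empty =>
    have hne : (newton f).Nonempty := by
      obtain ⟨b, hb⟩ :=
        Finsupp.support_nonempty_iff.mpr (AddMonoidAlgebra.coeff_eq_zero.not.mpr hf)
      exact ⟨_, castVec_mem_newton hb⟩
    simp_all [AddMonoidAlgebra.one_def, Set.zero_smul_set hne]
  | insert k s hk ih =>
    rw [prod_insert hk] at ha
    obtain ⟨b, hb, c, hc, rfl⟩ :=
      Finset.mem_add.mp (AddMonoidAlgebra.support_coeff_mul_subset _ _ ha)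
    have hconv : Convex ℝ (newton f) := convex_convexHull ℝ _
    rw [card_insert_of_notMem hk, Nat.cast_succ, add_comm,
      hconv.add_smul zero_le_one (Nat.cast_nonneg _), one_smul, map_add]
    exact Set.add_mem_add (castVec_mem_newton (hg k (mem_insert_self k s) hb))
      (ih (fun k' hk' => hg k' (mem_insert_of_mem hk')) hc)

lemma coeff_prod_card_nsmul_of_mem_extremePoints {f : AddMonoidAlgebra ℂ (Fin r → ℤ)}
    {v : Fin r → ℤ} (hv : castVec v ∈ (newton f).extremePoints ℝ) {ι : Type*}
    {s : Finset ι} {g : ι → AddMonoidAlgebra ℂ (Fin r → ℤ)}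
    (hg : ∀ k ∈ s, (g k).coeff.support ⊆ f.coeff.support) :
    (∏ k ∈ s, g k).coeff (#s • v) = ∏ k ∈ s, (g k).coeff v := by
  classical
  have hf : f ≠ 0 := by rintro rfl; simp [newton_zero] at hv
  induction s using Finset.induction_on with
  | empty => simp [AddMonoidAlgebra.one_def]
  | insert k s hk ih =>
    have hg' : ∀ k' ∈ s, (g k').coeff.support ⊆ f.coeff.support :=
      fun k' hk' => hg k' (mem_insert_of_mem hk')
    -- since `v` is extreme, `v + #s • v` splits only as the trivial sum
    have hunique : UniqueAdd (g k).coeff.support (∏ k' ∈ s, g k').coeff.support v (#s • v) := by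
      intro a b ha hb hab
      have hab' : castVec a + castVec b = (1 + (#s : ℝ)) • castVec v := by
        rw [← map_add, hab, map_add, castVec_nsmul, add_smul, one_smul]
      obtain ⟨ha', hb'⟩ := eq_of_add_eq_one_add_smul_of_mem_extremePoints (Nat.cast_nonneg _) hv
        (castVec_mem_newton (hg k (mem_insert_self k s) ha))
        (castVec_mem_card_smul_newton hf hg' hb) hab'
      exact ⟨castVec_injective ha', castVec_injective (by rw [hb', castVec_nsmul])⟩
    rw [prod_insert hk, prod_insert hk, card_insert_of_notMem hk, succ_nsmul',
      AddMonoidAlgebra.coeff_mul_add_of_uniqueAdd hunique, ih hg']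

theorem newton_prod {f : AddMonoidAlgebra ℂ (Fin r → ℤ)} (hf : f ≠ 0) {ι : Type*}
    {s : Finset ι} {g : ι → AddMonoidAlgebra ℂ (Fin r → ℤ)}
    (hg : ∀ k ∈ s, (g k).coeff.support = f.coeff.support) :
    newton (∏ k ∈ s, g k) = (#s : ℝ) • newton f := by
  refine le_antisymm (convexHull_min ?_ ((convex_convexHull ℝ _).smul _)) ?_
  · rintro _ ⟨a, ha, rfl⟩
    exact castVec_mem_card_smul_newton hf (fun k hk => (hg k hk).le) ha
  have hfin : (castVec '' (f.coeff.support : Set (Fin r → ℤ))).Finite :=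
    f.coeff.support.finite_toSet.image _
  rw [newton_eq_convexHull f, ← convexHull_extremePoints_convexHull hfin, ← convexHull_smul]
  refine convexHull_min ?_ (convex_convexHull ℝ _)
  rintro _ ⟨_, hx, rfl⟩
  obtain ⟨v, hv, rfl⟩ := extremePoints_convexHull_subset hx
  have hcoeff := coeff_prod_card_nsmul_of_mem_extremePoints hx (fun k hk => (hg k hk).le)
  dsimp only
  rw [← castVec_nsmul]
  refine castVec_mem_newton (Finsupp.mem_support_iff.mpr ?_)
  rw [hcoeff, prod_ne_zero_iff]
  exact fun k hk => Finsupp.mem_support_iff.mp ((hg k hk).symm ▸ hv)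

lemma isCompact_newton (f : AddMonoidAlgebra ℂ (Fin r → ℤ)) : IsCompact (newton f) :=
  (f.coeff.support.finite_toSet.image _).isCompact_convexHull (𝕜 := ℝ)

lemma finite_setOf_castVec_mem {K : Set (Fin r → ℝ)} (hK : IsCompact K) :
    {j | castVec j ∈ K}.Finite :=
  ((Topology.IsClosedEmbedding.piMap fun _ => Int.isClosedEmbedding_coe_real).isCompact_preimage
    hK).finite_of_discrete

lemma castVec_mem_pow_pred_smul {n : ℕ} (hn : n ≠ 0) {P : Set (Fin r → ℝ)} {b : Fin r → ℤ}
    (h : castVec (n • b) ∈ ((n : ℝ) ^ r) • P) : castVec b ∈ ((n : ℝ) ^ (r - 1)) • P := by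
  -- at `r = 0` the exponent `r - 1` truncates to `0`, but then `Fin 0 → ℤ` is a singleton
  cases r with
  | zero => simpa [Subsingleton.elim (n • b) b] using h
  | succ r =>
    rw [Nat.add_sub_cancel]
    rwa [pow_succ', mul_smul, castVec_nsmul,
      Set.smul_mem_smul_set_iff₀ (Nat.cast_ne_zero.mpr hn)] at h

end Newton

lemma IsPrimitiveRoot.pow_mod {M : Type*} [CommMonoid M] {ζ : M} {n : ℕ}
    (hζ : IsPrimitiveRoot ζ n) (m : ℕ) : ζ ^ (m % n) = ζ ^ m := by
  rw [hζ.eq_orderOf, pow_mod_orderOf]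

lemma IsPrimitiveRoot.pow_val_add {M : Type*} [CommMonoid M] {ζ : M} {n : ℕ}
    (hζ : IsPrimitiveRoot ζ n) (a b : Fin n) :
    ζ ^ ((a + b : Fin n) : ℕ) = ζ ^ (a : ℕ) * ζ ^ (b : ℕ) := by
  rw [Fin.val_add, hζ.pow_mod, pow_add]

section CyclicResultant

open Complex Real

variable {r n : ℕ}

lemma prod_zpow_eq_one_of_twist_eq_self {u : Fin r → ℂ} {g : AddMonoidAlgebra ℂ (Fin r → ℤ)}
    (h : twist u g = g) {a : Fin r → ℤ} (ha : a ∈ g.coeff.support) : ∏ i, u i ^ a i = 1 := by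
  have hcoeff := congrArg (fun g => g.coeff a) h
  simp only [coeff_twist] at hcoeff
  exact (mul_eq_left₀ (Finsupp.mem_support_iff.mp ha)).mp hcoeff

lemma cyc_eq_prod_twist_pow (n : ℕ) (f : AddMonoidAlgebra ℂ (Fin r → ℤ)) :
    cyc n f = ∏ k : Fin r → Fin n, twist (fun i => exp (2 * π * I / n) ^ (k i : ℕ)) f := by
  refine Finset.prod_congr rfl fun k _ => congrArg (twist · f) (funext fun i => ?_)
  rw [← Complex.exp_nat_mul]
  ring_nf

lemma twist_pow_cyc [NeZero n] (δ : Fin r → Fin n) (f : AddMonoidAlgebra ℂ (Fin r → ℤ)) :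
    twist (fun i => exp (2 * π * I / n) ^ (δ i : ℕ)) (cyc n f) = cyc n f := by
  have hζ : IsPrimitiveRoot (exp (2 * π * I / n)) n := isPrimitiveRoot_exp n (NeZero.ne n)
  rw [cyc_eq_prod_twist_pow, twist_prod fun i => pow_ne_zero _ (exp_ne_zero _)]
  simp_rw [twist_twist]
  refine Fintype.prod_equiv (Equiv.addRight δ) _ _ fun k => ?_
  congr 1
  funext i
  simp only [Pi.mul_apply, Equiv.coe_addRight, Pi.add_apply]
  rw [hζ.pow_val_add, mul_comm]

lemma dvd_of_mem_support_cyc [NeZero n] {f : AddMonoidAlgebra ℂ (Fin r → ℤ)} {a : Fin r → ℤ}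
    (ha : a ∈ (cyc n f).coeff.support) (i₀ : Fin r) : (n : ℤ) ∣ a i₀ := by
  have hζ : IsPrimitiveRoot (exp (2 * π * I / n)) n := isPrimitiveRoot_exp n (NeZero.ne n)
  have h := prod_zpow_eq_one_of_twist_eq_self (twist_pow_cyc (Pi.single i₀ 1) f) ha
  rw [Finset.prod_eq_single i₀ (fun i _ hi => by simp [hi]) (by simp)] at h
  rw [← hζ.zpow_eq_one_iff_dvd]
  simpa [Fin.val_one', hζ.pow_mod] using h

lemma newton_cyc [NeZero n] (f : AddMonoidAlgebra ℂ (Fin r → ℤ)) :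
    newton (cyc n f) = ((n : ℝ) ^ r) • newton f := by
  rcases eq_or_ne f 0 with rfl | hf
  · have hcyc : cyc n (0 : AddMonoidAlgebra ℂ (Fin r → ℤ)) = 0 :=
      Finset.prod_eq_zero (Finset.mem_univ 0) (by simp [twist])
    simp [hcyc, newton_zero]
  rw [cyc, newton_prod hf fun k _ => support_twist (fun i => exp_ne_zero _) f]
  simp

end CyclicResultant

/-- The Newton polytope of the cyclic resultant f̃ₙ is n^r Δ(f), and the number of
nonzero terms of f̃ₙ is at most the number of lattice points of n^{r−1} Δ(f). -/
theorem stmt14 (r n : ℕ) (hn : 1 ≤ n) (f : AddMonoidAlgebra ℂ (Fin r → ℤ)) :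
    newton (cyc n f) = ((n : ℝ) ^ r) • newton f ∧
    (cyc n f).coeff.support.card ≤
      Set.ncard {j : Fin r → ℤ |
        (fun i => (j i : ℝ)) ∈ ((n : ℝ) ^ (r - 1)) • newton f} := by
  have : NeZero n := ⟨by omega⟩
  refine ⟨newton_cyc f, ?_⟩
  set ψ : (Fin r → ℤ) → (Fin r → ℤ) := fun a i => a i / n
  have hψ : ∀ a ∈ (cyc n f).coeff.support, n • ψ a = a := fun a ha =>
    funext fun i => by simp [ψ, Int.mul_ediv_cancel' (dvd_of_mem_support_cyc ha i)]
  rw [← Set.ncard_coe_finset]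
  refine Set.ncard_le_ncard_of_injOn ψ (fun a ha => ?_) (fun a ha b hb hab => ?_)
    (finite_setOf_castVec_mem ((isCompact_newton f).smul _))
  · refine castVec_mem_pow_pred_smul (NeZero.ne n) ?_
    rw [hψ a ha, ← newton_cyc f]
    exact castVec_mem_newton ha
  · rw [← hψ a ha, ← hψ b hb, hab]
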